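/- arXiv:0812.0179 — 3 statements merged into one kernel-verified Lean document; each statement's English description precedes it below -/
import Mathlib

section
/- Let p be a prime and r a positive integer. If k, k', i, j are nonnegative integers with k ≡ k' (mod p^{2r}), 0 ≤ i ≤ r and 0 ≤ j ≤ r - i, then the binomial coefficients satisfy C(k - i, j) ≡ C(k' - i, j) (mod p^r), provided k, k' ≥ r. -/
/-!
Multiplying by `j!` turns `C(n, j)` into the falling factorial `n (n - 1) ⋯ (n - j + 1)`, a
polynomial in `n`, so `j! C(k - i, j) ≡ j! C(k' - i, j) (mod p^(2r))`. Since `v_p(j!) ≤ j ≤ r`,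
cancelling `j!` costs at most `r` factors of `p`, which leaves a congruence modulo `p^r`.
-/

theorem Nat.ModEq.descFactorial {m a b : ℕ} (h : a ≡ b [MOD m]) (j : ℕ) :
    a.descFactorial j ≡ b.descFactorial j [MOD m] := by
  rw [← ZMod.natCast_eq_natCast_iff] at h ⊢
  rw [← descPochhammer_eval_eq_descFactorial, ← descPochhammer_eval_eq_descFactorial, h]

theorem Nat.ModEq.of_mul_left_of_padicValNat_le {p s r a b c : ℕ} (hp : p.Prime) (hc : c ≠ 0)
    (hv : padicValNat p c ≤ s) (h : c * a ≡ c * b [MOD p ^ (s + r)]) : a ≡ b [MOD p ^ r] := by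
  have : Fact p.Prime := ⟨hp⟩
  have hgcd : Nat.gcd (p ^ (s + r)) c ∣ p ^ s := by
    obtain ⟨t, -, ht⟩ := (Nat.dvd_prime_pow hp).mp (Nat.gcd_dvd_left (p ^ (s + r)) c)
    have htc : p ^ t ∣ c := ht ▸ Nat.gcd_dvd_right _ _
    exact ht ▸ pow_dvd_pow p (((padicValNat_dvd_iff_le hc).mp htc).trans hv)
  refine (h.cancel_left_div_gcd (pow_pos hp.pos _)).of_dvd (Nat.dvd_div_of_mul_dvd ?_)
  calc Nat.gcd (p ^ (s + r)) c * p ^ r ∣ p ^ s * p ^ r := mul_dvd_mul_right hgcd _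
    _ = p ^ (s + r) := (pow_add p s r).symm

theorem stmt_1_general (p r k k' i j : ℕ) (hp : p.Prime)
    (hk : r ≤ k) (hk' : r ≤ k') (hkk' : k ≡ k' [MOD p ^ (2 * r)])
    (hi : i ≤ r) (hj : j ≤ r - i) :
    Nat.choose (k - i) j ≡ Nat.choose (k' - i) j [MOD p ^ r] := by
  have : Fact p.Prime := ⟨hp⟩
  have hsub : k - i ≡ k' - i [MOD p ^ (r + r)] := by
    refine Nat.ModEq.add_right_cancel' i ?_
    rwa [Nat.sub_add_cancel (by omega), Nat.sub_add_cancel (by omega), ← two_mul]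
  have hfac : j.factorial * (k - i).choose j ≡ j.factorial * (k' - i).choose j
      [MOD p ^ (r + r)] := by
    simpa only [Nat.descFactorial_eq_factorial_mul_choose] using hsub.descFactorial j
  exact hfac.of_mul_left_of_padicValNat_le hp (Nat.factorial_ne_zero j)
    ((padicValNat_factorial_le (p := p) j).trans (by omega))

/-- Let `p` be a prime and `r` a positive integer. If `k, k', i, j` are nonnegative integers
with `k ≡ k' (mod p^(2r))`, `0 ≤ i ≤ r` and `0 ≤ j ≤ r - i`, then `C(k-i, j) ≡ C(k'-i, j)
(mod p^r)`, provided `k, k' ≥ r`. -/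
theorem stmt_1 (p r k k' i j : ℕ) (hp : p.Prime) (hr : 0 < r)
    (hk : r ≤ k) (hk' : r ≤ k') (hkk' : k ≡ k' [MOD p ^ (2 * r)])
    (hi : i ≤ r) (hj : j ≤ r - i) :
    Nat.choose (k - i) j ≡ Nat.choose (k' - i) j [MOD p ^ r] :=
  stmt_1_general p r k k' i j hp hk hk' hkk' hi hj
end

section
/- Let O be a discrete valuation ring with maximal ideal (ϖ) and residue field of size q, let V be a free O-module of rank d, and let T : V → V be an O-linear endomorphism which, over the fraction field, is triangularizable with all eigenvalues μ of valuation v(μ) = c for a fixed nonnegative integer c. Then for any integer r > c, the cardinality of the kernel of T acting on V ⊗ O/(ϖ^r) divides q^{dc}; equivalently q^{d(r-c)} divides the cardinality of the cokernel (V ⊗ O/(ϖ^r)) / ker(T). -/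
/-!
Over a discrete valuation ring, the Smith normal form of an endomorphism `f` of a free module of
finite rank shows that `V ⧸ range f` has `q ^ v(det f)` elements. Applied to `T`, whose
determinant is the product of its eigenvalues, and to multiplication by `ϖ ^ r`, this gives
`#(V ⧸ range T) = q ^ (d c)` and `#(V ⧸ ϖ ^ r V) = q ^ (d r)`. On the finite module `V ⧸ ϖ ^ r V`
the kernel of `T` has the size of its cokernel, which is a quotient of `V ⧸ range T`; the second
claim then follows from `#ker T * #((V ⧸ ϖ ^ r V) ⧸ ker T) = q ^ (d r)`.
-/

open Module Submodule Polynomial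

theorem Nat.pow_sub_dvd_of_mul_eq_pow {q a b m n : ℕ} (hq : 0 < q) (ha : a ∣ q ^ m)
    (hab : a * b = q ^ n) : q ^ (n - m) ∣ b := by
  rcases le_total m n with hmn | hnm
  · refine Nat.dvd_of_mul_dvd_mul_left (pow_pos hq m) ?_
    rw [← pow_add, Nat.add_sub_cancel' hmn, ← hab]
    exact Nat.mul_dvd_mul_right ha b
  · simp [Nat.sub_eq_zero_of_le hnm]

section Cardinality

variable {R M : Type*} [Ring R] [AddCommGroup M] [Module R M]

theorem Submodule.card_quotient_mul_card (N : Submodule R M) :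
    Nat.card (M ⧸ N) * Nat.card N = Nat.card M := by
  rw [← cardQuot_apply]
  exact N.toAddSubgroup.index_mul_card

theorem Submodule.card_quotient_dvd_card_quotient_of_le {N P : Submodule R M} (h : N ≤ P) :
    Nat.card (M ⧸ P) ∣ Nat.card (M ⧸ N) := by
  rw [← cardQuot_apply, ← cardQuot_apply]
  exact AddSubgroup.index_dvd_of_le h

theorem LinearMap.card_ker_eq_card_quotient_range [Finite M] (f : M →ₗ[R] M) :
    Nat.card (ker f) = Nat.card (M ⧸ range f) := by
  rw [← cardQuot_apply]
  exact (AddSubgroup.index_range (f := f.toAddMonoidHom)).symm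

end Cardinality

theorem Submodule.card_quotient_range_mapQ_dvd {R M : Type*} [CommRing R] [AddCommGroup M]
    [Module R M] (N : Submodule R M) (f : M →ₗ[R] M) (h : N ≤ N.comap f) :
    Nat.card ((M ⧸ N) ⧸ LinearMap.range (N.mapQ N f h)) ∣ Nat.card (M ⧸ LinearMap.range f) := by
  rw [range_mapQ, Nat.card_congr (quotientQuotientEquivQuotientSup N (LinearMap.range f)).toEquiv]
  exact card_quotient_dvd_card_quotient_of_le le_sup_right

theorem Submodule.ideal_span_singleton_smul_top {R M : Type*} [CommRing R] [AddCommGroup M]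
    [Module R M] (a : R) :
    (Ideal.span {a} • ⊤ : Submodule R M) = LinearMap.range (a • LinearMap.id) := by
  rw [ideal_span_singleton_smul, LinearMap.range_eq_map]
  rfl

theorem LinearMap.det_eq_prod_of_charpoly_eq {R M ι : Type*} [CommRing R] [Nontrivial R]
    [AddCommGroup M] [Module R M] [Module.Free R M] [Module.Finite R M] [Fintype ι]
    (f : M →ₗ[R] M) (μ : ι → R) (h : f.charpoly = ∏ i, (X - C (μ i))) :
    LinearMap.det f = ∏ i, μ i := by
  have hrank : finrank R M = Fintype.card ι := by
    rw [← f.charpoly_natDegree, h, natDegree_finsetProd_X_sub_C_eq_card, Finset.card_univ]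
  rw [det_eq_sign_charpoly_coeff, h, coeff_zero_prod, hrank]
  simp only [coeff_sub, coeff_X_zero, coeff_C_zero, zero_sub, Finset.prod_neg, Finset.card_univ,
    ← mul_assoc, ← mul_pow, neg_one_mul, neg_neg, one_pow, one_mul]

theorem LinearMap.injective_of_det_ne_zero {R M : Type*} [CommRing R] [IsDomain R]
    [AddCommGroup M] [Module R M] [Module.Free R M] [Module.Finite R M]
    (f : M →ₗ[R] M) (hf : LinearMap.det f ≠ 0) : Function.Injective f := by
  classical
  let b := Module.Free.chooseBasis R M
  intro x y hxy
  have hmul := Matrix.mulVec_injective_of_det_ne_zero (M := LinearMap.toMatrix b b f)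
    (by rwa [LinearMap.det_toMatrix])
  have : (b.repr x : _ → R) = b.repr y :=
    hmul (by simp only [LinearMap.toMatrix_mulVec_repr, hxy])
  exact b.repr.injective (DFunLike.coe_injective this)

theorem Submodule.associated_det_subtype_comp_prod_smithNormalFormCoeffs {R M ι : Type*}
    [CommRing R] [IsDomain R] [IsPrincipalIdealRing R] [AddCommGroup M] [Module R M]
    [Fintype ι] [DecidableEq ι] (b : Basis ι R M) {N : Submodule R M}
    (h : finrank R N = finrank R M) (e : M ≃ₗ[R] N) :
    Associated (LinearMap.det (N.subtype ∘ₗ e)) (∏ i, smithNormalFormCoeffs b h i) := by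
  let b' := smithNormalFormTopBasis b h
  let a := smithNormalFormCoeffs b h
  let e' : M ≃ₗ[R] N := b'.equiv (smithNormalFormBotBasis b h) (Equiv.refl ι)
  have ha : ∀ i, (N.subtype ∘ₗ e') (b' i) = a i • b' i := fun i => by simp [e', b', a]
  have hdiag : LinearMap.toMatrix b' b' (N.subtype ∘ₗ e') = Matrix.diagonal a := by
    ext i j
    rw [LinearMap.toMatrix_apply, ha, map_smul, b'.repr_self, Finsupp.smul_single, smul_eq_mul,
      mul_one, Finsupp.single_apply, Matrix.diagonal_apply]
    by_cases hij : i = j <;> simp [hij, eq_comm]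
  refine (LinearMap.associated_det_comp_equiv _ e e').trans ?_
  rw [← LinearMap.det_toMatrix b', hdiag, Matrix.det_diagonal]

theorem card_quotient_span_pow {R : Type*} [CommRing R] [IsDedekindDomain R] {p : R}
    (hp : Prime p) (n : ℕ) :
    Nat.card (R ⧸ Ideal.span {p ^ n}) = Nat.card (R ⧸ Ideal.span {p}) ^ n := by
  have : (Ideal.span {p}).IsPrime := (Ideal.span_singleton_prime hp.ne_zero).mpr hp
  rw [← Ideal.span_singleton_pow, ← cardQuot_apply, ← cardQuot_apply,
    cardQuot_pow_of_prime (by simpa using hp.ne_zero)]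

namespace IsDiscreteValuationRing

variable {R : Type*} [CommRing R] [IsDomain R] [IsDiscreteValuationRing R]

theorem card_quotient_span_mul {a b : R} (ha : a ≠ 0) (hb : b ≠ 0) :
    Nat.card (R ⧸ Ideal.span {a * b}) =
      Nat.card (R ⧸ Ideal.span {a}) * Nat.card (R ⧸ Ideal.span {b}) := by
  obtain ⟨ϖ, hϖ⟩ := exists_irreducible R
  obtain ⟨m, hm⟩ := associated_pow_irreducible ha hϖ
  obtain ⟨n, hn⟩ := associated_pow_irreducible hb hϖ
  have hmn : Associated (a * b) (ϖ ^ (m + n)) := by rw [pow_add]; exact hm.mul_mul hn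
  rw [Ideal.span_singleton_eq_span_singleton.mpr hm,
    Ideal.span_singleton_eq_span_singleton.mpr hn, Ideal.span_singleton_eq_span_singleton.mpr hmn,
    card_quotient_span_pow hϖ.prime, card_quotient_span_pow hϖ.prime,
    card_quotient_span_pow hϖ.prime, pow_add]

theorem card_quotient_span_prod {ι : Type*} (s : Finset ι) {a : ι → R}
    (ha : ∀ i ∈ s, a i ≠ 0) :
    Nat.card (R ⧸ Ideal.span {∏ i ∈ s, a i}) = ∏ i ∈ s, Nat.card (R ⧸ Ideal.span {a i}) := by
  classical
  induction s using Finset.induction_on with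
  | empty => simp [Ideal.span_singleton_one]
  | insert j s hj ih =>
    rw [Finset.forall_mem_insert] at ha
    rw [Finset.prod_insert hj, Finset.prod_insert hj,
      card_quotient_span_mul ha.1 (Finset.prod_ne_zero_iff.mpr ha.2), ih ha.2]

variable {M : Type*} [AddCommGroup M] [Module R M] [Module.Free R M] [Module.Finite R M]

theorem card_quotient_range_eq_card_quotient_span_det (f : M →ₗ[R] M)
    (hf : LinearMap.det f ≠ 0) :
    Nat.card (M ⧸ LinearMap.range f) = Nat.card (R ⧸ Ideal.span {LinearMap.det f}) := by
  classical
  let b := Module.Free.chooseBasis R M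
  let e := LinearEquiv.ofInjective f (LinearMap.injective_of_det_ne_zero f hf)
  have h : finrank R (LinearMap.range f) = finrank R M := e.finrank_eq.symm
  have hassoc := associated_det_subtype_comp_prod_smithNormalFormCoeffs b h e
  rw [Nat.card_congr (quotientEquivPiSpan (LinearMap.range f) b h).toEquiv, Nat.card_pi,
    ← card_quotient_span_prod _ fun i _ => smithNormalFormCoeffs_ne_zero b h i,
    ← Ideal.span_singleton_eq_span_singleton.mpr hassoc]
  rfl

theorem card_quotient_range_of_associated_det {ϖ : R} (hϖ : Irreducible ϖ) {k : ℕ}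
    (f : M →ₗ[R] M) (hf : Associated (LinearMap.det f) (ϖ ^ k)) :
    Nat.card (M ⧸ LinearMap.range f) = Nat.card (R ⧸ Ideal.span {ϖ}) ^ k := by
  rw [card_quotient_range_eq_card_quotient_span_det f
      (hf.ne_zero_iff.mpr (pow_ne_zero k hϖ.ne_zero)),
    Ideal.span_singleton_eq_span_singleton.mpr hf, card_quotient_span_pow hϖ.prime]

end IsDiscreteValuationRing

open IsDiscreteValuationRing in
theorem stmt_3_general {O : Type*} [CommRing O] [IsDomain O] [IsDiscreteValuationRing O]
    (ϖ : O) (hϖ : Irreducible ϖ) (q : ℕ)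
    (hq : Nat.card (O ⧸ Ideal.span {ϖ}) = q) (hq0 : 0 < q)
    {V : Type*} [AddCommGroup V] [Module O V] [Module.Free O V] [Module.Finite O V]
    (d c r : ℕ) (hd : Module.finrank O V = d)
    (T : V →ₗ[O] V) (μ : Fin d → O)
    (hchar : LinearMap.charpoly T = ∏ i, (Polynomial.X - Polynomial.C (μ i)))
    (hval : ∀ i, Associated (μ i) (ϖ ^ c))
    (hT : (Ideal.span {ϖ ^ r} • ⊤ : Submodule O V) ≤
      ((Ideal.span {ϖ ^ r} • ⊤ : Submodule O V)).comap T) :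
    Nat.card (LinearMap.ker
        (Submodule.mapQ (Ideal.span {ϖ ^ r} • ⊤) (Ideal.span {ϖ ^ r} • ⊤) T hT)) ∣
      q ^ (d * c) ∧
    q ^ (d * (r - c)) ∣
      Nat.card ((V ⧸ (Ideal.span {ϖ ^ r} • ⊤ : Submodule O V)) ⧸
        LinearMap.ker
          (Submodule.mapQ (Ideal.span {ϖ ^ r} • ⊤) (Ideal.span {ϖ ^ r} • ⊤) T hT)) := by
  set N : Submodule O V := Ideal.span {ϖ ^ r} • ⊤ with hN
  have hdetX : LinearMap.det ((ϖ ^ r) • LinearMap.id : V →ₗ[O] V) = ϖ ^ (d * r) := by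
    rw [LinearMap.det_smul, LinearMap.det_id, mul_one, hd, ← pow_mul, mul_comm]
  have hcardX : Nat.card (V ⧸ N) = q ^ (d * r) := by
    rw [hN, ideal_span_singleton_smul_top,
      card_quotient_range_of_associated_det hϖ _ (.of_eq hdetX), hq]
  have hdetT : Associated (LinearMap.det T) (ϖ ^ (d * c)) := by
    rw [LinearMap.det_eq_prod_of_charpoly_eq T μ hchar, pow_mul', ← Fin.prod_const]
    exact Associated.prod _ _ _ fun i _ => hval i
  have : Finite (V ⧸ N) := Nat.finite_of_card_ne_zero (by rw [hcardX]; positivity)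
  have hker : Nat.card (LinearMap.ker (N.mapQ N T hT)) ∣ q ^ (d * c) := by
    rw [LinearMap.card_ker_eq_card_quotient_range, ← hq,
      ← card_quotient_range_of_associated_det hϖ T hdetT]
    exact card_quotient_range_mapQ_dvd N T hT
  refine ⟨hker, ?_⟩
  rw [Nat.mul_sub]
  refine Nat.pow_sub_dvd_of_mul_eq_pow hq0 hker ?_
  rw [mul_comm, card_quotient_mul_card, hcardX]

/-- Let `O` be a discrete valuation ring with uniformizer `ϖ`, residue field of size `q`,
`V` a free `O`-module of rank `d`, and `T : V → V` an `O`-linear endomorphism which, over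
the fraction field, is triangularizable with all eigenvalues `μ` of valuation `v(μ) = c`
(expressed here: the characteristic polynomial of `T` is `∏ (X - μ i)` with each `μ i`
associated to `ϖ^c`).  Then for any integer `r > c`, the cardinality of the kernel of `T`
acting on `V ⊗ O/(ϖ^r)` divides `q^(d·c)`; equivalently `q^(d(r-c))` divides the
cardinality of the cokernel `(V ⊗ O/(ϖ^r)) / ker T`. -/
theorem stmt_3 {O : Type*} [CommRing O] [IsDomain O] [IsDiscreteValuationRing O]
    (ϖ : O) (hϖ : Irreducible ϖ) (q : ℕ)
    (hq : Nat.card (O ⧸ Ideal.span {ϖ}) = q) (hq0 : 0 < q)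
    {V : Type*} [AddCommGroup V] [Module O V] [Module.Free O V] [Module.Finite O V]
    (d c r : ℕ) (hd : Module.finrank O V = d) (hrc : c < r)
    (T : V →ₗ[O] V) (μ : Fin d → O)
    (hchar : LinearMap.charpoly T = ∏ i, (Polynomial.X - Polynomial.C (μ i)))
    (hval : ∀ i, Associated (μ i) (ϖ ^ c))
    (hT : (Ideal.span {ϖ ^ r} • ⊤ : Submodule O V) ≤
      ((Ideal.span {ϖ ^ r} • ⊤ : Submodule O V)).comap T) :
    Nat.card (LinearMap.ker
        (Submodule.mapQ (Ideal.span {ϖ ^ r} • ⊤) (Ideal.span {ϖ ^ r} • ⊤) T hT)) ∣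
      q ^ (d * c) ∧
    q ^ (d * (r - c)) ∣
      Nat.card ((V ⧸ (Ideal.span {ϖ ^ r} • ⊤ : Submodule O V)) ⧸
        LinearMap.ker
          (Submodule.mapQ (Ideal.span {ϖ ^ r} • ⊤) (Ideal.span {ϖ ^ r} • ⊤) T hT)) :=
  stmt_3_general ϖ hϖ q hq hq0 d c r hd T μ hchar hval hT
end

section
/- Fix a prime p and positive integer r. If k, k' are integers with k, k' ≥ r and k ≡ k' (mod p^{2r}), then the Γ_1(p^r)-modules (L_k/U_{k,r}) ⊗ Z/(p^r) and (L_{k'}/U_{k',r}) ⊗ Z/(p^r) are isomorphic, via the map sending X^{k-i}Y^i ↦ X^{k'-i}Y^i for 0 ≤ i ≤ r. -/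
open MvPolynomial

/-- The (transpose-adjugate) substitution action of the matrix `(a b; c d)` on polynomials
in two variables: `P(X, Y) ↦ P(d X - b Y, -c X + a Y)`. -/
noncomputable def gammaAct {R : Type*} [CommRing R] (a b c d : R) :
    MvPolynomial (Fin 2) R →ₐ[R] MvPolynomial (Fin 2) R :=
  aeval ![C d * X 0 - C b * X 1, - C c * X 0 + C a * X 1]

/-- The submodule of `Z/(p^r)[X,Y]` spanned by all monomials other than the `X^(k-i) Y^i`
with `0 ≤ i ≤ r`; the quotient by it realizes `(L_k / U_{k,r}) ⊗ Z/(p^r)`. -/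
noncomputable def Nsub (R : Type*) [CommRing R] (k r : ℕ) : Submodule R (MvPolynomial (Fin 2) R) :=
  Submodule.span R
    {P | ∃ m : Fin 2 →₀ ℕ, P = monomial m 1 ∧ ¬ (m 1 ≤ r ∧ m 0 + m 1 = k)}

/-!
Over `Z/(p^r)` every `γ ∈ Γ₁(p^r)` acts as the unipotent matrix `(1 b; 0 1)`, which sends
`X^(k-i) Y^i` to `(X - bY)^(k-i) Y^i`. Modulo `U_{k,r}` only the terms `X^(k-i-j) Y^(i+j)` with
`j ≤ r - i` survive, with coefficients `C(k-i, j) (-b)^j`, so the basis correspondence is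
equivariant as soon as `C(k-i, j) ≡ C(k'-i, j) (mod p^r)` for `j ≤ r`. Since
`j! C(a, j) = a (a-1) ⋯ (a-j+1)` is a polynomial in `a`, `a ≡ b (mod p^(j+r))` gives
`p^(j+r) ∣ j! (C(a, j) - C(b, j))`, and `v_p(j!) ≤ j` leaves `p^r ∣ C(a, j) - C(b, j)`.
-/

theorem pow_dvd_of_pow_add_dvd_factorial_mul {p : ℕ} [Fact p.Prime] {j r : ℕ} {x : ℤ}
    (h : (p : ℤ) ^ (j + r) ∣ j.factorial * x) : (p : ℤ) ^ r ∣ x := by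
  rcases eq_or_ne x 0 with rfl | hx
  · exact dvd_zero _
  have hfac : (j.factorial : ℤ) ≠ 0 := by exact_mod_cast j.factorial_ne_zero
  rw [padicValInt_dvd_iff] at h ⊢
  refine .inr ?_
  rcases h with h | h
  · exact absurd h (mul_ne_zero hfac hx)
  rw [padicValInt.mul hfac hx, padicValInt.of_nat] at h
  have hfac_le := padicValNat_factorial_le (p := p) j
  omega

theorem choose_modEq_choose_of_modEq {p : ℕ} [Fact p.Prime] {a b j r : ℕ}
    (h : a ≡ b [MOD p ^ (j + r)]) : a.choose j ≡ b.choose j [MOD p ^ r] := by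
  have hdesc : ((p ^ (j + r) : ℕ) : ℤ) ∣ (b.descFactorial j : ℤ) - a.descFactorial j := by
    simpa only [descPochhammer_eval_eq_descFactorial] using
      (Nat.modEq_iff_dvd.mp h).trans (Polynomial.sub_dvd_eval_sub (b : ℤ) a (descPochhammer ℤ j))
  rw [Nat.descFactorial_eq_factorial_mul_choose, Nat.descFactorial_eq_factorial_mul_choose] at hdesc
  push_cast at hdesc
  rw [← mul_sub] at hdesc
  exact Nat.modEq_iff_dvd.mpr (by exact_mod_cast pow_dvd_of_pow_add_dvd_factorial_mul hdesc)

section QuotientShift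

variable {R : Type*} [CommRing R] {r k k' : ℕ}

lemma X_pow_mul_X_pow_eq_monomial (a b : ℕ) :
    (X 0 ^ a * X 1 ^ b : MvPolynomial (Fin 2) R)
      = monomial (Finsupp.single 0 a + Finsupp.single 1 b) 1 := by
  rw [X_pow_eq_monomial, X_pow_eq_monomial, monomial_mul, one_mul]

lemma mk_monomial_eq_zero {m : Fin 2 →₀ ℕ} (h : ¬ (m 1 ≤ r ∧ m 0 + m 1 = k)) (c : R) :
    (Submodule.Quotient.mk (monomial m c) : MvPolynomial (Fin 2) R ⧸ Nsub R k r) = 0 := by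
  rw [Submodule.Quotient.mk_eq_zero, ← mul_one c, ← smul_eq_mul, ← smul_monomial]
  exact Submodule.smul_mem _ c (Submodule.subset_span ⟨m, rfl, h⟩)

variable (R r k k') in
noncomputable def windowShift : MvPolynomial (Fin 2) R →ₗ[R] MvPolynomial (Fin 2) R :=
  (basisMonomials (Fin 2) R).constr R fun m =>
    if m 1 ≤ r ∧ m 0 + m 1 = k then
      monomial (Finsupp.single 0 (k' - m 1) + Finsupp.single 1 (m 1)) 1 else 0

lemma windowShift_monomial (m : Fin 2 →₀ ℕ) (c : R) :
    windowShift R r k k' (monomial m c)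
      = if m 1 ≤ r ∧ m 0 + m 1 = k then
          monomial (Finsupp.single 0 (k' - m 1) + Finsupp.single 1 (m 1)) c else 0 := by
  rw [← mul_one c, ← smul_eq_mul, ← smul_monomial, map_smul, windowShift,
    show monomial m (1 : R) = basisMonomials (Fin 2) R m from rfl, Module.Basis.constr_basis]
  split_ifs <;> simp [smul_monomial]

variable (R r k k') in
noncomputable def quotShift :
    (MvPolynomial (Fin 2) R ⧸ Nsub R k r) →ₗ[R] (MvPolynomial (Fin 2) R ⧸ Nsub R k' r) :=
  (Nsub R k r).liftQ ((Nsub R k' r).mkQ ∘ₗ windowShift R r k k') <| by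
    rw [Nsub, Submodule.span_le]
    rintro _ ⟨m, rfl, hm⟩
    simp [windowShift_monomial, hm]

lemma quotShift_mk_X_pow_mul {i : ℕ} (hi : i ≤ r) (hik : i ≤ k) :
    quotShift R r k k' (Submodule.Quotient.mk (X 0 ^ (k - i) * X 1 ^ i))
      = Submodule.Quotient.mk (X 0 ^ (k' - i) * X 1 ^ i) := by
  rw [X_pow_mul_X_pow_eq_monomial, X_pow_mul_X_pow_eq_monomial, quotShift,
    Submodule.liftQ_apply, LinearMap.comp_apply, windowShift_monomial]
  simp [hi, Nat.sub_add_cancel hik]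

lemma quotShift_comp_quotShift (hk' : r ≤ k') :
    quotShift R r k' k ∘ₗ quotShift R r k k' = LinearMap.id := by
  refine Submodule.linearMap_qext _ ((basisMonomials (Fin 2) R).ext fun m => ?_)
  rw [coe_basisMonomials]
  by_cases hm : m 1 ≤ r ∧ m 0 + m 1 = k
  · have hmono : (monomial m 1 : MvPolynomial (Fin 2) R) = X 0 ^ (k - m 1) * X 1 ^ m 1 := by
      have hm' : Finsupp.single 0 (m 0) + Finsupp.single 1 (m 1) = m := by
        ext x
        fin_cases x <;> simp
      rw [X_pow_mul_X_pow_eq_monomial, ← hm.2, Nat.add_sub_cancel, hm']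
    simp only [LinearMap.comp_apply, Submodule.mkQ_apply, LinearMap.id_apply, hmono]
    rw [quotShift_mk_X_pow_mul hm.1 (by omega), quotShift_mk_X_pow_mul hm.1 (by omega)]
  · simp [mk_monomial_eq_zero hm]

variable (R r) in
noncomputable def quotShiftEquiv (hk : r ≤ k) (hk' : r ≤ k') :
    (MvPolynomial (Fin 2) R ⧸ Nsub R k r) ≃ₗ[R] (MvPolynomial (Fin 2) R ⧸ Nsub R k' r) :=
  .ofLinearMap (quotShift R r k k') (quotShift R r k' k)
    (quotShift_comp_quotShift hk) (quotShift_comp_quotShift hk')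

lemma gammaAct_one_zero_one (β : R) (n i : ℕ) :
    gammaAct (1 : R) β 0 1 (X 0 ^ n * X 1 ^ i) = (X 0 - C β * X 1) ^ n * X 1 ^ i := by
  simp [gammaAct]

lemma mk_gammaAct_one_zero_one {i : ℕ} (hi : i ≤ r) (hk : r ≤ k) (β : R) :
    (Submodule.Quotient.mk (gammaAct (1 : R) β 0 1 (X 0 ^ (k - i) * X 1 ^ i))
        : MvPolynomial (Fin 2) R ⧸ Nsub R k r)
      = ∑ j ∈ Finset.range (r - i + 1), (((k - i).choose j : R) * (-β) ^ j) •
          Submodule.Quotient.mk (X 0 ^ (k - i - j) * X 1 ^ (i + j)) := by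
  have hexpand : (X 0 - C β * X 1 : MvPolynomial (Fin 2) R) ^ (k - i) * X 1 ^ i
      = ∑ j ∈ Finset.range (k - i + 1),
          (((k - i).choose j : R) * (-β) ^ j) • (X 0 ^ (k - i - j) * X 1 ^ (i + j)) := by
    rw [sub_eq_neg_add, ← neg_mul, ← map_neg, add_pow, Finset.sum_mul]
    refine Finset.sum_congr rfl fun j _ => ?_
    rw [smul_eq_C_mul, map_mul, map_pow, map_natCast, pow_add]
    ring
  rw [gammaAct_one_zero_one, hexpand, ← Submodule.mkQ_apply, map_sum,
    ← Finset.sum_subset (Finset.range_subset_range.mpr (by omega : r - i + 1 ≤ k - i + 1))]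
  · simp only [map_smul, Submodule.mkQ_apply]
  · intro j _ hj
    rw [Finset.mem_range, not_lt] at hj
    rw [map_smul, Submodule.mkQ_apply, X_pow_mul_X_pow_eq_monomial, mk_monomial_eq_zero, smul_zero]
    simp only [Finsupp.add_apply, Finsupp.single_eq_same, Finsupp.single_eq_of_ne zero_ne_one,
      Finsupp.single_eq_of_ne one_ne_zero]
    omega

theorem quotShift_mk_gammaAct_one_zero_one {i : ℕ} (hi : i ≤ r) (hk : r ≤ k) (hk' : r ≤ k')
    (β : R) (hchoose : ∀ j ≤ r - i, ((k - i).choose j : R) = (k' - i).choose j) :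
    quotShift R r k k' (Submodule.Quotient.mk (gammaAct (1 : R) β 0 1 (X 0 ^ (k - i) * X 1 ^ i)))
      = Submodule.Quotient.mk (gammaAct (1 : R) β 0 1 (X 0 ^ (k' - i) * X 1 ^ i)) := by
  rw [mk_gammaAct_one_zero_one hi hk, mk_gammaAct_one_zero_one hi hk', map_sum]
  refine Finset.sum_congr rfl fun j hj => ?_
  rw [Finset.mem_range] at hj
  rw [map_smul, Nat.sub_sub, Nat.sub_sub, quotShift_mk_X_pow_mul (by omega) (by omega),
    hchoose j (by omega)]

end QuotientShift

theorem stmt_7_general (p : ℕ) (hp : p.Prime) (r : ℕ) (k k' : ℕ)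
    (hk : r ≤ k) (hk' : r ≤ k') (hkk' : k ≡ k' [MOD p ^ (2 * r)]) :
    ∃ e : (MvPolynomial (Fin 2) (ZMod (p ^ r)) ⧸ Nsub (ZMod (p ^ r)) k r)
          ≃ₗ[ZMod (p ^ r)]
          (MvPolynomial (Fin 2) (ZMod (p ^ r)) ⧸ Nsub (ZMod (p ^ r)) k' r),
      (∀ i : ℕ, i ≤ r →
        e (Submodule.Quotient.mk (X 0 ^ (k - i) * X 1 ^ i))
          = Submodule.Quotient.mk (X 0 ^ (k' - i) * X 1 ^ i)) ∧
      (∀ a b c d : ℤ, a * d - b * c = 1 → ((p : ℤ) ^ r ∣ c) →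
          a ≡ 1 [ZMOD (p : ℤ) ^ r] → d ≡ 1 [ZMOD (p : ℤ) ^ r] →
        ∀ i : ℕ, i ≤ r →
          e (Submodule.Quotient.mk
              (gammaAct (a : ZMod (p ^ r)) (b : ZMod (p ^ r)) (c : ZMod (p ^ r))
                (d : ZMod (p ^ r)) (X 0 ^ (k - i) * X 1 ^ i)))
            = Submodule.Quotient.mk
              (gammaAct (a : ZMod (p ^ r)) (b : ZMod (p ^ r)) (c : ZMod (p ^ r))
                (d : ZMod (p ^ r)) (X 0 ^ (k' - i) * X 1 ^ i))) := by
  have : Fact p.Prime := ⟨hp⟩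
  refine ⟨quotShiftEquiv _ r hk hk', fun i hi => quotShift_mk_X_pow_mul hi (by omega), ?_⟩
  intro a b c d _ hc ha hd i hi
  have hc0 : (c : ZMod (p ^ r)) = 0 := (ZMod.intCast_zmod_eq_zero_iff_dvd _ _).mpr (by simpa)
  have ha1 : (a : ZMod (p ^ r)) = 1 := by
    simpa using (ZMod.intCast_eq_intCast_iff a 1 (p ^ r)).mpr (by simpa using ha)
  have hd1 : (d : ZMod (p ^ r)) = 1 := by
    simpa using (ZMod.intCast_eq_intCast_iff d 1 (p ^ r)).mpr (by simpa using hd)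
  rw [ha1, hc0, hd1]
  refine quotShift_mk_gammaAct_one_zero_one hi hk hk' _ fun j hj => ?_
  have hshift : k - i ≡ k' - i [MOD p ^ (j + r)] :=
    (Nat.ModEq.sub_right (by omega) (by omega) hkk').of_dvd (pow_dvd_pow p (by omega))
  exact (ZMod.natCast_eq_natCast_iff _ _ _).mpr (choose_modEq_choose_of_modEq hshift)

/-- Fix a prime `p` and positive integer `r`.  If `k, k' ≥ r` and `k ≡ k' (mod p^(2r))`,
then the `Γ₁(p^r)`-modules `(L_k/U_{k,r}) ⊗ Z/(p^r)` and `(L_{k'}/U_{k',r}) ⊗ Z/(p^r)`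
are isomorphic via `X^(k-i) Y^i ↦ X^(k'-i) Y^i` (0 ≤ i ≤ r): there is a `Z/(p^r)`-linear
equivalence sending basis monomials correspondingly and intertwining the action of every
`γ ∈ Γ₁(p^r)`. -/
theorem stmt_7 (p : ℕ) (hp : p.Prime) (r : ℕ) (hr : 0 < r) (k k' : ℕ)
    (hk : r ≤ k) (hk' : r ≤ k') (hkk' : k ≡ k' [MOD p ^ (2 * r)]) :
    ∃ e : (MvPolynomial (Fin 2) (ZMod (p ^ r)) ⧸ Nsub (ZMod (p ^ r)) k r)
          ≃ₗ[ZMod (p ^ r)]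
          (MvPolynomial (Fin 2) (ZMod (p ^ r)) ⧸ Nsub (ZMod (p ^ r)) k' r),
      (∀ i : ℕ, i ≤ r →
        e (Submodule.Quotient.mk (X 0 ^ (k - i) * X 1 ^ i))
          = Submodule.Quotient.mk (X 0 ^ (k' - i) * X 1 ^ i)) ∧
      (∀ a b c d : ℤ, a * d - b * c = 1 → ((p : ℤ) ^ r ∣ c) →
          a ≡ 1 [ZMOD (p : ℤ) ^ r] → d ≡ 1 [ZMOD (p : ℤ) ^ r] →
        ∀ i : ℕ, i ≤ r →
          e (Submodule.Quotient.mk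
              (gammaAct (a : ZMod (p ^ r)) (b : ZMod (p ^ r)) (c : ZMod (p ^ r))
                (d : ZMod (p ^ r)) (X 0 ^ (k - i) * X 1 ^ i)))
            = Submodule.Quotient.mk
              (gammaAct (a : ZMod (p ^ r)) (b : ZMod (p ^ r)) (c : ZMod (p ^ r))
                (d : ZMod (p ^ r)) (X 0 ^ (k' - i) * X 1 ^ i))) :=
  stmt_7_general p hp r k k' hk hk' hkk'
end
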